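/- arXiv:1511.09156 — 6 statements merged into one kernel-verified Lean document; each statement's English description precedes it below -/
import Mathlib

section
/- For every finite simple graph G with vertex set V and all subsets X, Y, T ⊆ V, one has |Γ_T(X)| + |Γ_T(Y)| ≥ |Γ_T(X ∩ Y)| + |Γ_T(X ∪ Y)|. -/
/-! A vertex of `Γ(X ∩ Y)` or of `Γ(X ∪ Y)` lies in `Γ(X)` or in `Γ(Y)`, and a vertex of both
`Γ(X ∩ Y)` and `Γ(X ∪ Y)` lies in both `Γ(X)` and `Γ(Y)`. Intersecting with `T` and applying
inclusion–exclusion `|A| + |B| = |A ∪ B| + |A ∩ B|` to both sides gives the inequality. -/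

/-- `nbr G X` is Γ(X): the set of vertices outside `X` adjacent to a vertex of `X`. -/
def nbr {V : Type*} [Fintype V] [DecidableEq V] (G : SimpleGraph V) [DecidableRel G.Adj]
    (X : Finset V) : Finset V :=
  Finset.univ.filter (fun v => v ∉ X ∧ ∃ u ∈ X, G.Adj u v)


theorem Finset.card_add_card_le_card_add_card {α : Type*} [DecidableEq α] {s t u v : Finset α}
    (hunion : s ∪ t ⊆ u ∪ v) (hinter : s ∩ t ⊆ u ∩ v) : s.card + t.card ≤ u.card + v.card := by
  rw [← card_union_add_card_inter s t, ← card_union_add_card_inter u v]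
  exact Nat.add_le_add (card_le_card hunion) (card_le_card hinter)

section Neighbourhood

variable {V : Type*} [Fintype V] [DecidableEq V] (G : SimpleGraph V) [DecidableRel G.Adj]

theorem mem_nbr {X : Finset V} {v : V} : v ∈ nbr G X ↔ v ∉ X ∧ ∃ u ∈ X, G.Adj u v := by
  simp [nbr]

theorem nbr_inter_union_nbr_union_subset (X Y : Finset V) :
    nbr G (X ∩ Y) ∪ nbr G (X ∪ Y) ⊆ nbr G X ∪ nbr G Y := by
  intro v
  simp only [Finset.mem_union, Finset.mem_inter, mem_nbr]
  grind

theorem nbr_inter_inter_nbr_union_subset (X Y : Finset V) :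
    nbr G (X ∩ Y) ∩ nbr G (X ∪ Y) ⊆ nbr G X ∩ nbr G Y := by
  intro v
  simp only [Finset.mem_union, Finset.mem_inter, mem_nbr]
  grind

end Neighbourhood

theorem stmt_1 {V : Type*} [Fintype V] [DecidableEq V]
    (G : SimpleGraph V) [DecidableRel G.Adj] (X Y T : Finset V) :
    (nbr G (X ∩ Y) ∩ T).card + (nbr G (X ∪ Y) ∩ T).card ≤
      (nbr G X ∩ T).card + (nbr G Y ∩ T).card := by
  apply Finset.card_add_card_le_card_add_card
  · rw [← Finset.union_inter_distrib_right, ← Finset.union_inter_distrib_right]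
    exact Finset.inter_subset_inter_right (nbr_inter_union_nbr_union_subset G X Y)
  · rw [← Finset.inter_inter_distrib_right, ← Finset.inter_inter_distrib_right]
    exact Finset.inter_subset_inter_right (nbr_inter_inter_nbr_union_subset G X Y)
end

section
/- Let H be a finite simple graph and let d be a nonnegative integer. If the edges of H can be oriented so that every vertex has in-degree at most d, then H is (2d+1)-colorable, i.e., its chromatic number is at most 2d + 1. -/
/-!
Every finite set `s` of vertices spans at most `∑_{v ∈ s} indeg_s v ≤ d |s|` edges, since each
edge is oriented towards one of its ends; so `s` contains a vertex with at most `2d` neighbours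
in `s`. Hence `H` is `2d`-degenerate, and colouring greedily, the vertex of small degree last,
uses at most `2d + 1` colours.
-/

open Finset

namespace SimpleGraph

variable {V : Type*} (G : SimpleGraph V) [DecidableRel G.Adj]

theorem exists_coloringOn_of_forall_exists_card_neighbor_le [DecidableEq V] (k : ℕ)
    (h : ∀ s : Finset V, s.Nonempty → ∃ v ∈ s, #{u ∈ s | G.Adj v u} ≤ k) (s : Finset V) :
    ∃ f : V → Fin (k + 1), ∀ u ∈ s, ∀ w ∈ s, G.Adj u w → f u ≠ f w := by
  induction s using Finset.strongInduction with
  | H s ih =>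
    obtain rfl | hs := s.eq_empty_or_nonempty
    · exact ⟨0, by simp⟩
    obtain ⟨v, hvs, hv⟩ := h s hs
    obtain ⟨f, hf⟩ := ih (s.erase v) (erase_ssubset hvs)
    obtain ⟨c, -, hc⟩ := exists_mem_notMem_of_card_lt_card
        (s := image f {u ∈ s | G.Adj v u}) (t := univ) <| by
      simpa using (card_image_le.trans hv).trans_lt k.lt_succ_self
    refine ⟨Function.update f v c, fun u hu w hw huw => ?_⟩
    have hc' : ∀ x ∈ s, G.Adj v x → f x ≠ c := fun x hx hvx hfx =>
      hc (mem_image.2 ⟨x, mem_filter.2 ⟨hx, hvx⟩, hfx⟩)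
    obtain rfl | hu' := eq_or_ne v u <;> obtain rfl | hw' := eq_or_ne v w
    · exact absurd huw (G.loopless.irrefl _)
    · simpa [hw'.symm] using (hc' w hw huw).symm
    · simpa [hu'.symm] using hc' u hu huw.symm
    · simpa [hu'.symm, hw'.symm] using
        hf u (mem_erase.2 ⟨hu'.symm, hu⟩) w (mem_erase.2 ⟨hw'.symm, hw⟩) huw

theorem colorable_succ_of_forall_exists_card_neighbor_le [Fintype V] (k : ℕ)
    (h : ∀ s : Finset V, s.Nonempty → ∃ v ∈ s, #{u ∈ s | G.Adj v u} ≤ k) :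
    G.Colorable (k + 1) := by
  classical
  obtain ⟨f, hf⟩ := G.exists_coloringOn_of_forall_exists_card_neighbor_le k h univ
  exact ⟨Coloring.mk f fun huw => hf _ (mem_univ _) _ (mem_univ _) huw⟩

theorem exists_card_neighbor_le_of_orientation [DecidableEq V] {A : V → V → Prop} [DecidableRel A]
    {d : ℕ}
    (hcover : ∀ u v, G.Adj u v → A u v ∨ A v u) {s : Finset V} (hs : s.Nonempty)
    (hdeg : ∀ v ∈ s, #{u ∈ s | A u v} ≤ d) :
    ∃ v ∈ s, #{u ∈ s | G.Adj v u} ≤ 2 * d := by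
  have hdeg_le : ∀ v, #{u ∈ s | G.Adj v u} ≤ #{u ∈ s | A u v} + #{u ∈ s | A v u} := fun v =>
    (card_le_card fun u hu => by
        simp only [mem_filter, mem_union] at hu ⊢
        exact (hcover v u hu.2).symm.imp (⟨hu.1, ·⟩) (⟨hu.1, ·⟩)).trans
      (card_union_le _ _)
  have hout_eq_in : ∑ v ∈ s, #{u ∈ s | A v u} = ∑ v ∈ s, #{u ∈ s | A u v} :=
    sum_card_bipartiteAbove_eq_sum_card_bipartiteBelow A
  refine exists_le_of_sum_le hs ?_
  calc ∑ v ∈ s, #{u ∈ s | G.Adj v u}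
      ≤ ∑ v ∈ s, (#{u ∈ s | A u v} + #{u ∈ s | A v u}) := sum_le_sum fun v _ => hdeg_le v
    _ = 2 * ∑ v ∈ s, #{u ∈ s | A u v} := by rw [sum_add_distrib, hout_eq_in, two_mul]
    _ ≤ ∑ _v ∈ s, 2 * d := by rw [← mul_sum]; exact Nat.mul_le_mul_left 2 (sum_le_sum hdeg)

end SimpleGraph

theorem stmt_13_general {V : Type*} [Fintype V] (H : SimpleGraph V) (d : ℕ)
    -- A is an orientation of the edges of H
    (A : V → V → Prop) [DecidableRel A]
    (hcover : ∀ u v : V, H.Adj u v → A u v ∨ A v u)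
    -- every vertex has in-degree at most d
    (hdeg : ∀ v : V, (Finset.univ.filter (fun u => A u v)).card ≤ d) :
    H.Colorable (2 * d + 1) := by
  classical
  refine H.colorable_succ_of_forall_exists_card_neighbor_le (2 * d) fun s hs => ?_
  refine H.exists_card_neighbor_le_of_orientation hcover hs fun v _ => ?_
  exact (card_le_card (filter_subset_filter _ (subset_univ s))).trans (hdeg v)

theorem stmt_13 {V : Type*} [Fintype V] (H : SimpleGraph V) (d : ℕ)
    -- A is an orientation of the edges of H
    (A : V → V → Prop) [DecidableRel A]
    (hsub : ∀ u v : V, A u v → H.Adj u v)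
    (hasym : ∀ u v : V, A u v → ¬ A v u)
    (hcover : ∀ u v : V, H.Adj u v → A u v ∨ A v u)
    -- every vertex has in-degree at most d
    (hdeg : ∀ v : V, (Finset.univ.filter (fun u => A u v)).card ≤ d) :
    H.Colorable (2 * d + 1) :=
  stmt_13_general H d A hcover hdeg
end

section
/- Let G be a finite simple graph with vertex set V, let T ⊆ V, and let F be an uncrossable family of subsets of V with ∅ ∉ F. Let X, Y ∈ F. If X is minimal in F (with respect to inclusion), then either X ⊆ Y or (X ∩ Y⁺ = ∅ and X⁺ ∩ Y = ∅). In particular, if both X and Y are minimal in F and X ≠ Y, then X ∩ Y⁺ = ∅ = X⁺ ∩ Y. -/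
/-- `cl G X` is X⁺ = X ∪ Γ(X). -/
def cl {V : Type*} [Fintype V] [DecidableEq V] (G : SimpleGraph V) [DecidableRel G.Adj]
    (X : Finset V) : Finset V :=
  X ∪ nbr G X

/-- A family F of subsets of V is uncrossable with respect to T. -/
def Uncrossable {V : Type*} [Fintype V] [DecidableEq V] (G : SimpleGraph V)
    [DecidableRel G.Adj] (T : Finset V) (F : Set (Finset V)) : Prop :=
  (∀ X ∈ F, ∀ Y ∈ F, (X ∩ Y ∈ F ∧ X ∪ Y ∈ F) ∨ (X \ cl G Y ∈ F ∧ Y \ cl G X ∈ F)) ∧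
  (∀ X ∈ F, ∀ Y ∈ F, (X ∩ Y ∩ T).Nonempty → X ∩ Y ∈ F ∧ X ∪ Y ∈ F)

section Closure

variable {V : Type*} [Fintype V] [DecidableEq V] (G : SimpleGraph V) [DecidableRel G.Adj]

lemma mem_cl {X : Finset V} {v : V} : v ∈ cl G X ↔ v ∈ X ∨ ∃ u ∈ X, G.Adj u v := by
  by_cases hv : v ∈ X <;> simp [cl, nbr, hv]

lemma disjoint_cl_iff {X Y : Finset V} :
    Disjoint X (cl G Y) ↔ Disjoint X Y ∧ ∀ u ∈ X, ∀ v ∈ Y, ¬G.Adj u v := by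
  simp only [Finset.disjoint_left, mem_cl]
  constructor
  · intro h
    exact ⟨fun u hu hv => h hu (Or.inl hv), fun u hu v hv hadj => h hu (Or.inr ⟨v, hv, hadj.symm⟩)⟩
  · rintro ⟨hXY, hadj⟩ u hu (hv | ⟨v, hv, huv⟩)
    exacts [hXY hu hv, hadj u hu v hv huv.symm]

lemma disjoint_cl_comm {X Y : Finset V} : Disjoint X (cl G Y) ↔ Disjoint (cl G X) Y := by
  rw [disjoint_comm (a := cl G X), disjoint_cl_iff, disjoint_cl_iff, disjoint_comm]
  exact and_congr_right fun _ => forall₂_comm.trans (forall₂_congr fun _ _ =>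
    forall₂_congr fun _ _ => not_congr (G.adj_comm _ _))

end Closure

/-- Uncrossing a minimal member `X` with any member `Y` leaves a member inside `X`, namely
`X ∩ Y` or `X \ Y⁺`, which must then be `X` itself. -/
lemma Uncrossable.subset_or_disjoint_cl_of_minimal {V : Type*} [Fintype V] [DecidableEq V]
    {G : SimpleGraph V} [DecidableRel G.Adj] {T : Finset V} {F : Set (Finset V)}
    (hF : Uncrossable G T F) {X Y : Finset V} (hX : X ∈ F) (hY : Y ∈ F)
    (hmin : ∀ Z ∈ F, Z ⊆ X → Z = X) : X ⊆ Y ∨ Disjoint X (cl G Y) := by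
  rcases hF.1 X hX Y hY with ⟨hXY, -⟩ | ⟨hXY, -⟩
  · exact Or.inl (Finset.inter_eq_left.mp (hmin _ hXY Finset.inter_subset_left))
  · exact Or.inr (Finset.sdiff_eq_self_iff_disjoint.mp (hmin _ hXY Finset.sdiff_subset))

theorem stmt_15_general {V : Type*} [Fintype V] [DecidableEq V]
    (G : SimpleGraph V) [DecidableRel G.Adj] (T : Finset V)
    (F : Set (Finset V)) (hF : Uncrossable G T F)
    (X Y : Finset V) (hX : X ∈ F) (hY : Y ∈ F)
    (hmin : ∀ Z ∈ F, Z ⊆ X → Z = X) :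
    (X ⊆ Y ∨ (X ∩ cl G Y = ∅ ∧ cl G X ∩ Y = ∅)) ∧
    ((∀ Z ∈ F, Z ⊆ Y → Z = Y) → X ≠ Y → X ∩ cl G Y = ∅ ∧ cl G X ∩ Y = ∅) := by
  have separated : Disjoint X (cl G Y) → X ∩ cl G Y = ∅ ∧ cl G X ∩ Y = ∅ := fun h =>
    ⟨Finset.disjoint_iff_inter_eq_empty.mp h,
      Finset.disjoint_iff_inter_eq_empty.mp ((disjoint_cl_comm G).mp h)⟩
  rcases hF.subset_or_disjoint_cl_of_minimal hX hY hmin with hXY | hXY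
  · exact ⟨Or.inl hXY, fun hminY hne => absurd (hminY X hX hXY) hne⟩
  · exact ⟨Or.inr (separated hXY), fun _ _ => separated hXY⟩

theorem stmt_15 {V : Type*} [Fintype V] [DecidableEq V]
    (G : SimpleGraph V) [DecidableRel G.Adj] (T : Finset V)
    (F : Set (Finset V)) (hF : Uncrossable G T F) (hne : (∅ : Finset V) ∉ F)
    (X Y : Finset V) (hX : X ∈ F) (hY : Y ∈ F)
    (hmin : ∀ Z ∈ F, Z ⊆ X → Z = X) :
    (X ⊆ Y ∨ (X ∩ cl G Y = ∅ ∧ cl G X ∩ Y = ∅)) ∧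
    ((∀ Z ∈ F, Z ⊆ Y → Z = Y) → X ≠ Y → X ∩ cl G Y = ∅ ∧ cl G X ∩ Y = ∅) :=
  stmt_15_general G T F hF X Y hX hY hmin
end

section
/- Let G be a finite simple graph with vertex set V and let T ⊆ V. If F is an uncrossable family of subsets of V, then for any S ⊆ V the family F_S := {X ∈ F : S ∩ Γ(X) = ∅} is also uncrossable. -/
/-!
Every set produced by uncrossing `X` and `Y` (namely `X ∩ Y`, `X ∪ Y`, `X \ Y⁺`, `Y \ X⁺`)
has its neighbourhood inside `Γ(X) ∪ Γ(Y)`. Hence the property `S ∩ Γ(X) = ∅` is preserved by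
uncrossing, and any such property cuts an uncrossable family down to an uncrossable one.
-/

section Neighbourhood

variable {V : Type*} [Fintype V] [DecidableEq V] (G : SimpleGraph V) [DecidableRel G.Adj]

theorem nbr_inter_subset (X Y : Finset V) : nbr G (X ∩ Y) ⊆ nbr G X ∪ nbr G Y := by
  intro v hv
  obtain ⟨hvXY, u, huXY, huv⟩ := (mem_nbr G).1 hv
  obtain ⟨huX, huY⟩ := Finset.mem_inter.1 huXY
  by_cases hvX : v ∈ X
  · have hvY : v ∉ Y := fun hvY => hvXY (Finset.mem_inter.2 ⟨hvX, hvY⟩)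
    exact Finset.mem_union_right _ ((mem_nbr G).2 ⟨hvY, u, huY, huv⟩)
  · exact Finset.mem_union_left _ ((mem_nbr G).2 ⟨hvX, u, huX, huv⟩)

theorem nbr_union_subset (X Y : Finset V) : nbr G (X ∪ Y) ⊆ nbr G X ∪ nbr G Y := by
  intro v hv
  obtain ⟨hvXY, u, huXY, huv⟩ := (mem_nbr G).1 hv
  rw [Finset.mem_union, not_or] at hvXY
  rcases Finset.mem_union.1 huXY with huX | huY
  · exact Finset.mem_union_left _ ((mem_nbr G).2 ⟨hvXY.1, u, huX, huv⟩)
  · exact Finset.mem_union_right _ ((mem_nbr G).2 ⟨hvXY.2, u, huY, huv⟩)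

/-- A neighbour of `X \ Y⁺` lying in `X` is in `Y⁺`, and it cannot be in `Y` itself since its
neighbour outside `Y⁺` would then be in `Γ(Y)`. -/
theorem nbr_sdiff_cl_subset (X Y : Finset V) : nbr G (X \ cl G Y) ⊆ nbr G X ∪ nbr G Y := by
  intro v hv
  obtain ⟨hvD, u, huD, huv⟩ := (mem_nbr G).1 hv
  obtain ⟨huX, huclY⟩ := Finset.mem_sdiff.1 huD
  by_cases hvX : v ∈ X
  · have hvclY : v ∈ cl G Y := by
      by_contra h
      exact hvD (Finset.mem_sdiff.2 ⟨hvX, h⟩)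
    rcases Finset.mem_union.1 hvclY with hvY | hvnY
    · have huY : u ∉ Y := fun huY => huclY (Finset.mem_union_left _ huY)
      exact absurd (Finset.mem_union_right _ ((mem_nbr G).2 ⟨huY, v, hvY, huv.symm⟩)) huclY
    · exact Finset.mem_union_right _ hvnY
  · exact Finset.mem_union_left _ ((mem_nbr G).2 ⟨hvX, u, huX, huv⟩)

end Neighbourhood

theorem Uncrossable.sep {V : Type*} [Fintype V] [DecidableEq V] {G : SimpleGraph V}
    [DecidableRel G.Adj] {T : Finset V} {F : Set (Finset V)} (hF : Uncrossable G T F)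
    (P : Finset V → Prop) (hinter : ∀ X Y, P X → P Y → P (X ∩ Y))
    (hunion : ∀ X Y, P X → P Y → P (X ∪ Y))
    (hsdiff : ∀ X Y, P X → P Y → P (X \ cl G Y)) :
    Uncrossable G T {X ∈ F | P X} := by
  obtain ⟨hcross, hT⟩ := hF
  constructor
  · rintro X ⟨hXF, hX⟩ Y ⟨hYF, hY⟩
    rcases hcross X hXF Y hYF with ⟨hi, hu⟩ | ⟨hXY, hYX⟩
    · exact Or.inl ⟨⟨hi, hinter X Y hX hY⟩, ⟨hu, hunion X Y hX hY⟩⟩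
    · exact Or.inr ⟨⟨hXY, hsdiff X Y hX hY⟩, ⟨hYX, hsdiff Y X hY hX⟩⟩
  · rintro X ⟨hXF, hX⟩ Y ⟨hYF, hY⟩ hne
    obtain ⟨hi, hu⟩ := hT X hXF Y hYF hne
    exact ⟨⟨hi, hinter X Y hX hY⟩, ⟨hu, hunion X Y hX hY⟩⟩

theorem inter_eq_empty_of_subset_union {α : Type*} [DecidableEq α] {s a b c : Finset α}
    (hc : c ⊆ a ∪ b) (ha : s ∩ a = ∅) (hb : s ∩ b = ∅) : s ∩ c = ∅ := by
  rw [← Finset.disjoint_iff_inter_eq_empty] at ha hb ⊢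
  exact (Finset.disjoint_union_right.2 ⟨ha, hb⟩).mono_right hc

theorem stmt_16 {V : Type*} [Fintype V] [DecidableEq V]
    (G : SimpleGraph V) [DecidableRel G.Adj] (T : Finset V)
    (F : Set (Finset V)) (hF : Uncrossable G T F) (S : Finset V) :
    Uncrossable G T {X ∈ F | S ∩ nbr G X = ∅} :=
  hF.sep _
    (fun X Y hX hY => inter_eq_empty_of_subset_union (nbr_inter_subset G X Y) hX hY)
    (fun X Y hX hY => inter_eq_empty_of_subset_union (nbr_union_subset G X Y) hX hY)
    (fun X Y hX hY => inter_eq_empty_of_subset_union (nbr_sdiff_cl_subset G X Y) hX hY)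
end

section
/- Let G be the unit disk graph on a finite set V of points in the Euclidean plane. There do not exist a vertex v ∈ V and six sets X₁, …, X₆ ⊆ V such that v ∈ Γ(X_i) for each i = 1, …, 6 and X_i ∩ X_j⁺ = ∅ for all i ≠ j. Equivalently, if sets X₁, …, X_d ⊆ V pairwise satisfy X_i ∩ X_j⁺ = ∅ and some vertex v has a neighbor in each X_i, then d ≤ 5. -/
open Real Metric

theorem add_val_mul_le_of_le_succ_sub {n : ℕ} {φ : Fin (n + 1) → ℝ} {c : ℝ}
    (h : ∀ i : Fin n, c ≤ φ i.succ - φ i.castSucc) (k : Fin (n + 1)) : φ 0 + k * c ≤ φ k := by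
  induction k using Fin.induction with
  | zero => simp
  | succ i ih =>
    have := h i
    push_cast [Fin.val_succ, Fin.val_castSucc] at ih ⊢
    linarith

theorem exists_ne_cos_two_pi_div_le_cos_sub {n : ℕ} (hn : 1 ≤ n) (θ : Fin (n + 1) → ℝ)
    (hθ : ∀ i, θ i ∈ Set.Ioc (-π) π) :
    ∃ i j, i ≠ j ∧ cos (2 * π / (n + 1)) ≤ cos (θ i - θ j) := by
  set c := 2 * π / (n + 1) with hc_def
  have hcn : (n + 1) * c = 2 * π := by rw [hc_def]; field_simp
  have hcπ : c ≤ π := by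
    have : (2 : ℝ) ≤ n + 1 := by exact_mod_cast Nat.succ_le_succ hn
    nlinarith [pi_pos]
  by_contra! hfar
  have gap : ∀ i j, i ≠ j → ∀ g, 0 ≤ g → cos g = cos (θ i - θ j) → c < g := by
    intro i j hij g hg hcos
    by_contra! hgc
    linarith [hfar i j hij, cos_le_cos_of_nonneg_of_le_pi hg hcπ hgc]
  set σ := Tuple.sort θ
  set φ := θ ∘ σ
  have hmono : Monotone φ := Tuple.monotone_sort θ
  have hφ (k : Fin (n + 1)) : φ k ∈ Set.Ioc (-π) π := hθ (σ k)
  have hsteps (i : Fin n) : c ≤ φ i.succ - φ i.castSucc :=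
    (gap _ _ (σ.injective.ne Fin.castSucc_lt_succ.ne') _
      (sub_nonneg.2 (hmono (Fin.castSucc_le_succ i))) rfl).le
  have hspan := add_val_mul_le_of_le_succ_sub hsteps (Fin.last n)
  have hlast_ne : (0 : Fin (n + 1)) ≠ Fin.last n := by simp [Fin.ext_iff]; omega
  -- the circular gap from the largest angle back to the smallest one
  have hwrap : c < φ 0 + 2 * π - φ (Fin.last n) :=
    gap _ _ (σ.injective.ne hlast_ne) _
      (by linarith [(hφ 0).1, (hφ (Fin.last n)).2])
      (by rw [add_sub_right_comm, cos_add_two_pi]; rfl)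
  simp only [Fin.val_last] at hspan
  linarith

namespace Complex

theorem norm_sub_sq_eq_sq_add_sq_sub_mul_cos_arg_sub (z w : ℂ) :
    ‖z - w‖ ^ 2 = ‖z‖ ^ 2 + ‖w‖ ^ 2 - 2 * ‖z‖ * ‖w‖ * Real.cos (arg z - arg w) := by
  have hre : (z * (starRingEnd ℂ) w).re = ‖z‖ * ‖w‖ * Real.cos (arg z - arg w) := by
    rw [Real.cos_sub, mul_re, conj_re, conj_im, ← norm_mul_cos_arg z, ← norm_mul_sin_arg z,
      ← norm_mul_cos_arg w, ← norm_mul_sin_arg w]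
    ring
  rw [Complex.sq_norm, normSq_sub, normSq_eq_norm_sq, normSq_eq_norm_sq, hre]
  ring

theorem norm_sub_le_of_half_le_cos_arg_sub {z w : ℂ} {r : ℝ} (hz : ‖z‖ ≤ r) (hw : ‖w‖ ≤ r)
    (hcos : 1 / 2 ≤ Real.cos (arg z - arg w)) : ‖z - w‖ ≤ r := by
  have hz0 := norm_nonneg z
  have hw0 := norm_nonneg w
  have hsq : ‖z - w‖ ^ 2 ≤ r ^ 2 := by
    rw [norm_sub_sq_eq_sq_add_sq_sub_mul_cos_arg_sub]
    nlinarith [mul_nonneg (sub_nonneg.2 hz) (sub_nonneg.2 hw), mul_nonneg hz0 (sub_nonneg.2 hz),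
      mul_nonneg hw0 (sub_nonneg.2 hw), mul_nonneg (mul_nonneg hz0 hw0) (sub_nonneg.2 hcos)]
  exact (pow_le_pow_iff_left₀ (norm_nonneg _) (hz0.trans hz) two_ne_zero).1 hsq

theorem exists_ne_dist_le_of_mem_closedBall (z : Fin 6 → ℂ) {c : ℂ} {r : ℝ}
    (hz : ∀ i, z i ∈ closedBall c r) : ∃ i j, i ≠ j ∧ dist (z i) (z j) ≤ r := by
  obtain ⟨i, j, hij, hcos⟩ := exists_ne_cos_two_pi_div_le_cos_sub (n := 5) (by norm_num)
    (fun i => arg (z i - c)) (fun i => arg_mem_Ioc _)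
  have hπ3 : Real.cos (2 * π / ((5 : ℕ) + 1)) = 1 / 2 := by
    rw [show 2 * π / ((5 : ℕ) + 1) = π / 3 by push_cast; ring, cos_pi_div_three]
  refine ⟨i, j, hij, ?_⟩
  rw [dist_eq, ← sub_sub_sub_cancel_right (z i) (z j) c]
  exact norm_sub_le_of_half_le_cos_arg_sub (mem_closedBall_iff_norm.1 (hz i))
    (mem_closedBall_iff_norm.1 (hz j)) (hπ3 ▸ hcos)

end Complex

theorem EuclideanSpace.exists_ne_dist_le_of_mem_closedBall (p : Fin 6 → EuclideanSpace ℝ (Fin 2))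
    {c : EuclideanSpace ℝ (Fin 2)} {r : ℝ} (hp : ∀ i, p i ∈ closedBall c r) :
    ∃ i j, i ≠ j ∧ dist (p i) (p j) ≤ r := by
  let f := Complex.orthonormalBasisOneI.repr.symm
  obtain ⟨i, j, hij, h⟩ := Complex.exists_ne_dist_le_of_mem_closedBall (f ∘ p) (c := f c)
    fun i => by simpa [mem_closedBall, f.dist_map] using hp i
  exact ⟨i, j, hij, by simpa [f.dist_map] using h⟩

section Separation

variable {V : Type*} [Fintype V] [DecidableEq V] {G : SimpleGraph V} [DecidableRel G.Adj]
  {X Y : Finset V}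

theorem exists_adj_of_mem_nbr {v : V} (hv : v ∈ nbr G X) : ∃ u ∈ X, G.Adj u v := by
  simp only [nbr, Finset.mem_filter, Finset.mem_univ, true_and] at hv
  exact hv.2

theorem ne_and_not_adj_of_inter_cl_eq_empty (h : X ∩ cl G Y = ∅) {a b : V} (ha : a ∈ X)
    (hb : b ∈ Y) : a ≠ b ∧ ¬ G.Adj b a := by
  have hcl : a ∉ cl G Y := fun hmem => by simpa [h] using Finset.mem_inter.2 ⟨ha, hmem⟩
  have haY : a ∉ Y := fun haY => hcl (Finset.mem_union_left _ haY)
  refine ⟨fun hab => haY (hab ▸ hb), fun hba => hcl (Finset.mem_union_right _ ?_)⟩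
  simp only [nbr, Finset.mem_filter, Finset.mem_univ, true_and]
  exact ⟨haY, b, hb, hba⟩

end Separation

theorem stmt_17_general {V : Type*} [Fintype V] [DecidableEq V]
    (p : V → EuclideanSpace ℝ (Fin 2))
    (G : SimpleGraph V) [DecidableRel G.Adj]
    (hG : ∀ u v : V, G.Adj u v ↔ u ≠ v ∧ dist (p u) (p v) ≤ 1) :
    ¬ ∃ (v : V) (X : Fin 6 → Finset V),
      (∀ i : Fin 6, v ∈ nbr G (X i)) ∧
      (∀ i j : Fin 6, i ≠ j → X i ∩ cl G (X j) = ∅) := by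
  rintro ⟨v, X, hv, hsep⟩
  choose u hu hadj using fun i => exists_adj_of_mem_nbr (hv i)
  obtain ⟨i, j, hij, hclose⟩ := EuclideanSpace.exists_ne_dist_le_of_mem_closedBall (p ∘ u)
    (c := p v) (r := 1) fun i => mem_closedBall.2 ((hG _ _).1 (hadj i)).2
  obtain ⟨hne, hnadj⟩ := ne_and_not_adj_of_inter_cl_eq_empty (hsep i j hij) (hu i) (hu j)
  exact hnadj ((hG _ _).2 ⟨hne.symm, by rwa [dist_comm]⟩)

theorem stmt_17 {V : Type*} [Fintype V] [DecidableEq V]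
    (p : V → EuclideanSpace ℝ (Fin 2)) (hp : Function.Injective p)
    (G : SimpleGraph V) [DecidableRel G.Adj]
    (hG : ∀ u v : V, G.Adj u v ↔ u ≠ v ∧ dist (p u) (p v) ≤ 1) :
    ¬ ∃ (v : V) (X : Fin 6 → Finset V),
      (∀ i : Fin 6, v ∈ nbr G (X i)) ∧
      (∀ i j : Fin 6, i ≠ j → X i ∩ cl G (X j) = ∅) :=
  stmt_17_general p G hG
end

section
/- Let G be a finite simple graph with vertex set V, let m be a positive integer, and define sets I₁, …, I_m ⊆ V inductively by choosing I_i to be a maximal independent set of the subgraph of G induced by V \ (I₁ ∪ ⋯ ∪ I_{i−1}). Then for every i with 1 ≤ i ≤ m, the set I₁ ∪ ⋯ ∪ I_i is an i-dominating set of G: every vertex v ∈ V \ (I₁ ∪ ⋯ ∪ I_i) has at least i neighbors in I₁ ∪ ⋯ ∪ I_i. -/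
/-!
For `j ≤ i`, the vertex `v` lies outside `I 1 ∪ ⋯ ∪ I j`, so maximality of `I j` gives it a
neighbour in `I j`. The sets `I 1, …, I i` are pairwise disjoint, so these `i` neighbours are
distinct.
-/

open Finset

theorem card_le_card_filter_biUnion {ι α : Type*} [DecidableEq α] {s : Finset ι}
    {I : ι → Finset α} (hI : (s : Set ι).PairwiseDisjoint I) (p : α → Prop) [DecidablePred p]
    (hp : ∀ j ∈ s, ∃ u ∈ I j, p u) : #s ≤ #((s.biUnion I).filter p) := by
  rw [filter_biUnion]
  refine card_le_card_biUnion (hI.mono fun j ↦ filter_subset p (I j)) fun j hj ↦ ?_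
  obtain ⟨u, hu, hpu⟩ := hp j hj
  exact ⟨u, mem_filter.mpr ⟨hu, hpu⟩⟩

theorem pairwiseDisjoint_Icc_of_forall_notMem_biUnion_Ico {α : Type*} [DecidableEq α]
    {I : ℕ → Finset α} {n : ℕ}
    (h : ∀ k, 1 ≤ k → k ≤ n → ∀ v ∈ I k, v ∉ (Ico 1 k).biUnion I) :
    (Icc 1 n : Set ℕ).PairwiseDisjoint I := by
  have avoid_earlier : ∀ j k, j ∈ Icc 1 n → k ∈ Icc 1 n → j < k → Disjoint (I j) (I k) := by
    intro j k hj hk hjk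
    rw [mem_Icc] at hj hk
    refine disjoint_right.mpr fun v hvk hvj ↦ h k hk.1 hk.2 v hvk ?_
    exact mem_biUnion.mpr ⟨j, mem_Ico.mpr ⟨hj.1, hjk⟩, hvj⟩
  intro j hj k hk hne
  rcases hne.lt_or_gt with hjk | hkj
  · exact avoid_earlier j k hj hk hjk
  · exact (avoid_earlier k j hk hj hkj).symm

theorem stmt_18_general {V : Type*} [DecidableEq V]
    (G : SimpleGraph V) [DecidableRel G.Adj] (m : ℕ)
    (I : ℕ → Finset V)
    -- for 1 ≤ i ≤ m, I i lies in V \ (I 1 ∪ ⋯ ∪ I (i-1))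
    (hsub : ∀ i, 1 ≤ i → i ≤ m → ∀ v ∈ I i, v ∉ (Finset.Ico 1 i).biUnion I)
    -- I i is a maximal independent set of the subgraph induced by V \ (I 1 ∪ ⋯ ∪ I (i-1))
    (hmax : ∀ i, 1 ≤ i → i ≤ m → ∀ v : V, v ∉ (Finset.Ico 1 i).biUnion I → v ∉ I i →
      ∃ u ∈ I i, G.Adj u v) :
    -- I 1 ∪ ⋯ ∪ I i is an i-dominating set
    ∀ i, 1 ≤ i → i ≤ m → ∀ v : V, v ∉ (Finset.Icc 1 i).biUnion I →
      i ≤ (((Finset.Icc 1 i).biUnion I).filter (fun u => G.Adj v u)).card := by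
  intro i _ him v hv
  have hdisj : (Icc 1 i : Set ℕ).PairwiseDisjoint I :=
    pairwiseDisjoint_Icc_of_forall_notMem_biUnion_Ico fun k hk hki ↦ hsub k hk (hki.trans him)
  have hneighbour : ∀ j ∈ Icc 1 i, ∃ u ∈ I j, G.Adj v u := by
    intro j hj
    rw [mem_Icc] at hj
    have hv_earlier : v ∉ (Ico 1 j).biUnion I := fun h ↦
      hv (biUnion_subset_biUnion_of_subset_left I (Ico_subset_Icc_self.trans
        (Icc_subset_Icc_right hj.2)) h)
    have hv_j : v ∉ I j := fun h ↦ hv (mem_biUnion.mpr ⟨j, mem_Icc.mpr hj, h⟩)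
    obtain ⟨u, hu, hadj⟩ := hmax j hj.1 (hj.2.trans him) v hv_earlier hv_j
    exact ⟨u, hu, hadj.symm⟩
  simpa using card_le_card_filter_biUnion hdisj _ hneighbour

theorem stmt_18 {V : Type*} [Fintype V] [DecidableEq V]
    (G : SimpleGraph V) [DecidableRel G.Adj] (m : ℕ) (hm : 1 ≤ m)
    (I : ℕ → Finset V)
    -- for 1 ≤ i ≤ m, I i lies in V \ (I 1 ∪ ⋯ ∪ I (i-1))
    (hsub : ∀ i, 1 ≤ i → i ≤ m → ∀ v ∈ I i, v ∉ (Finset.Ico 1 i).biUnion I)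
    -- I i is an independent set
    (hind : ∀ i, 1 ≤ i → i ≤ m → ∀ u ∈ I i, ∀ v ∈ I i, ¬ G.Adj u v)
    -- I i is a maximal independent set of the subgraph induced by V \ (I 1 ∪ ⋯ ∪ I (i-1))
    (hmax : ∀ i, 1 ≤ i → i ≤ m → ∀ v : V, v ∉ (Finset.Ico 1 i).biUnion I → v ∉ I i →
      ∃ u ∈ I i, G.Adj u v) :
    -- I 1 ∪ ⋯ ∪ I i is an i-dominating set
    ∀ i, 1 ≤ i → i ≤ m → ∀ v : V, v ∉ (Finset.Icc 1 i).biUnion I →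
      i ≤ (((Finset.Icc 1 i).biUnion I).filter (fun u => G.Adj v u)).card :=
  stmt_18_general G m I hsub hmax
end
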